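/- The sorting of a pair of t-spread monomials is again a pair of t-spread monomials: if (a_1 < ··· < a_d) and (b_1 < ··· < b_d) both have consecutive gaps ≥ t, and c_1 ≤ c_2 ≤ ··· ≤ c_{2d} is the merged sorted sequence, then (c_1, c_3, ..., c_{2d-1}) and (c_2, c_4, ..., c_{2d}) both have consecutive gaps ≥ t. -/

import Mathlib

/-!
For a sequence `f` on positions `1, …, n` write `N_f(x)` for the number of positions `j` with
`f j < x`. If `f` has gaps `≥ t`, each window `[y, y + t)` contains at most one value of `f`, so
`N_f(y + t) ≤ N_f(y) + 1`. Since the values of `c` are those of `a` and `b` together,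
`N_c = N_a + N_b` and hence `N_c(y + t) ≤ N_c(y) + 2`. For sorted `c` this forces
`c k + t ≤ c (k + 2)`: otherwise the window `[c k, c k + t)` would contain `c k, c (k+1), c (k+2)`.
-/

def IsTSpread (t d : ℕ) (a : ℕ → ℕ) : Prop :=
  (∀ l, 1 ≤ l → l ≤ d → 1 ≤ a l) ∧ ∀ l, 2 ≤ l → l ≤ d → a (l - 1) + t ≤ a l

open Finset

def HasGapsAtLeast (t n : ℕ) (f : ℕ → ℕ) : Prop :=
  ∀ l, 2 ≤ l → l ≤ n → f (l - 1) + t ≤ f l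

namespace HasGapsAtLeast

variable {t n : ℕ} {f : ℕ → ℕ}

theorem add_le (hf : HasGapsAtLeast t n f) {i j : ℕ} (hi : 1 ≤ i) (hij : i < j) (hj : j ≤ n) :
    f i + t ≤ f j := by
  induction j, hij using Nat.le_induction with
  | base => simpa using hf (i + 1) (by omega) hj
  | succ j hij ih =>
    have hstep : f j + t ≤ f (j + 1) := by simpa using hf (j + 1) (by omega) hj
    have := ih (by omega)
    omega

theorem card_filter_lt_add_le (hf : HasGapsAtLeast t n f) (y : ℕ) :
    #{j ∈ Icc 1 n | f j < y + t} ≤ #{j ∈ Icc 1 n | f j < y} + 1 := by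
  have hwindow : #({j ∈ Icc 1 n | f j < y + t} \ {j ∈ Icc 1 n | f j < y}) ≤ 1 := by
    refine card_le_one.mpr fun i hi j hj => ?_
    simp only [mem_sdiff, mem_filter, mem_Icc, not_and, not_lt] at hi hj
    rcases lt_trichotomy i j with hij | rfl | hji
    · have := hf.add_le hi.1.1.1 hij hj.1.1.2
      have := hi.2 hi.1.1
      omega
    · rfl
    · have := hf.add_le hj.1.1.1 hji hi.1.1.2
      have := hj.2 hj.1.1
      omega
  have hsub : {j ∈ Icc 1 n | f j < y} ⊆ {j ∈ Icc 1 n | f j < y + t} :=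
    monotone_filter_right _ fun _ _ h => by omega
  have := card_sdiff_add_card_eq_card hsub
  omega

theorem card_filter_lt_le (hf : HasGapsAtLeast 0 n f) {k : ℕ} (hk : 1 ≤ k) :
    #{j ∈ Icc 1 n | f j < f k} ≤ k - 1 := by
  have hsub : {j ∈ Icc 1 n | f j < f k} ⊆ Ico 1 k := by
    intro j hj
    simp only [mem_filter, mem_Icc, mem_Ico] at hj ⊢
    refine ⟨hj.1.1, Nat.lt_of_not_le fun hkj => ?_⟩
    rcases hkj.eq_or_lt with rfl | hkj
    · omega
    · have := hf.add_le hk hkj hj.1.2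
      omega
  simpa using card_le_card hsub

theorem le_card_filter_lt (hf : HasGapsAtLeast 0 n f) {m x : ℕ} (hmn : m ≤ n) (hm : f m < x) :
    m ≤ #{j ∈ Icc 1 n | f j < x} := by
  have hsub : Icc 1 m ⊆ {j ∈ Icc 1 n | f j < x} := by
    intro j hj
    simp only [mem_filter, mem_Icc] at hj ⊢
    refine ⟨⟨hj.1, by omega⟩, ?_⟩
    rcases hj.2.eq_or_lt with rfl | hjm
    · exact hm
    · have := hf.add_le hj.1 hjm hmn
      omega
  simpa using card_le_card hsub

theorem add_le_of_card_filter_lt_add_le (hf : HasGapsAtLeast 0 n f) {m : ℕ}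
    (hcount : ∀ y, #{j ∈ Icc 1 n | f j < y + t} ≤ #{j ∈ Icc 1 n | f j < y} + m)
    {k : ℕ} (hk : 1 ≤ k) (hkm : k + m ≤ n) : f k + t ≤ f (k + m) := by
  by_contra! h
  have := hf.card_filter_lt_le hk
  have := hf.le_card_filter_lt hkm h
  have := hcount (f k)
  omega

end HasGapsAtLeast

section MultisetMapEqAdd

variable {ι α : Type*} {s s₁ s₂ : Finset ι} {a b c : ι → α}

theorem card_filter_eq_add_of_map_eq_add (h : s.val.map c = s₁.val.map a + s₂.val.map b)
    (p : α → Prop) [DecidablePred p] :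
    #{j ∈ s | p (c j)} = #{j ∈ s₁ | p (a j)} + #{j ∈ s₂ | p (b j)} := by
  have hcount := congrArg (Multiset.countP p) h
  simp only [Multiset.countP_add, Multiset.countP_map] at hcount
  exact hcount

theorem forall_mem_of_map_eq_add (h : s.val.map c = s₁.val.map a + s₂.val.map b)
    {p : α → Prop} (ha : ∀ j ∈ s₁, p (a j)) (hb : ∀ j ∈ s₂, p (b j)) : ∀ j ∈ s, p (c j) := by
  intro j hj
  have hmem : c j ∈ s₁.val.map a + s₂.val.map b := h ▸ Multiset.mem_map_of_mem c hj
  rcases Multiset.mem_add.mp hmem with hmem | hmem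
  · obtain ⟨i, hi, hia⟩ := Multiset.mem_map.mp hmem
    exact hia ▸ ha i hi
  · obtain ⟨i, hi, hib⟩ := Multiset.mem_map.mp hmem
    exact hib ▸ hb i hi

end MultisetMapEqAdd

theorem sort_of_tSpread_pair_is_tSpread
    (t d : ℕ) (a b c : ℕ → ℕ)
    (ha : IsTSpread t d a) (hb : IsTSpread t d b)
    (hmono : ∀ l, 2 ≤ l → l ≤ 2 * d → c (l - 1) ≤ c l)
    (hperm : (Finset.Icc 1 (2 * d)).val.map c =
      (Finset.Icc 1 d).val.map a + (Finset.Icc 1 d).val.map b) :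
    IsTSpread t d (fun l => c (2 * l - 1)) ∧ IsTSpread t d (fun l => c (2 * l)) := by
  have hsorted : HasGapsAtLeast 0 (2 * d) c := hmono
  have hpos : ∀ l ∈ Icc 1 (2 * d), 1 ≤ c l := forall_mem_of_map_eq_add hperm
    (fun j hj => ha.1 j (mem_Icc.mp hj).1 (mem_Icc.mp hj).2)
    (fun j hj => hb.1 j (mem_Icc.mp hj).1 (mem_Icc.mp hj).2)
  have hcount (y : ℕ) :
      #{j ∈ Icc 1 (2 * d) | c j < y + t} ≤ #{j ∈ Icc 1 (2 * d) | c j < y} + 2 := by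
    rw [card_filter_eq_add_of_map_eq_add hperm (· < y + t),
      card_filter_eq_add_of_map_eq_add hperm (· < y)]
    have := HasGapsAtLeast.card_filter_lt_add_le ha.2 y
    have := HasGapsAtLeast.card_filter_lt_add_le hb.2 y
    omega
  have hstep (k : ℕ) (hk : 1 ≤ k) (hkd : k + 2 ≤ 2 * d) : c k + t ≤ c (k + 2) :=
    hsorted.add_le_of_card_filter_lt_add_le hcount hk hkd
  refine ⟨⟨fun l hl hld => hpos _ (mem_Icc.mpr ⟨by omega, by omega⟩), fun l hl hld => ?_⟩,
    ⟨fun l hl hld => hpos _ (mem_Icc.mpr ⟨by omega, by omega⟩), fun l hl hld => ?_⟩⟩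
  · convert hstep (2 * l - 3) (by omega) (by omega) using 3 <;> omega
  · convert hstep (2 * l - 2) (by omega) (by omega) using 3 <;> omega
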